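/- Let H be a finite-dimensional complex inner product space, ψ ∈ H a unit vector, and P₁, ..., P_L orthogonal projections on H. Then 1 - √(⟨ψ, P_L ψ⟩) · √(⟨ψ, P₁⋯P_{L-1} P_L P_{L-1}⋯P₁ ψ⟩) ≤ ∑_{i=1}^{L} √(⟨ψ, Q_i ψ⟩) · √(⟨ψ, P₁⋯P_{i-1} Q_i P_{i-1}⋯P₁ ψ⟩), where Q_i = I - P_i and empty products are the identity. -/

import Mathlib

/-! With `D k = P k ⋯ P 1`, the numbers `f k = re ⟪ψ, D k ψ⟫` telescope: `1 - f L` is the sum of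
`f (i - 1) - f i = re ⟪ψ, Q i (D (i - 1) ψ)⟫ = re ⟪Q i ψ, Q i (D (i - 1) ψ)⟫`, each bounded by
`‖Q i ψ‖ * ‖Q i (D (i - 1) ψ)‖` (Cauchy–Schwarz), and likewise `f L ≤ ‖P L ψ‖ * ‖P L (D (L - 1) ψ)‖`.
These norms are exactly the square roots of the statement: `P 1 ⋯ P (i - 1)` is the adjoint of
`D (i - 1)`, and a symmetric projection `A` satisfies `⟪x, A x⟫ = ‖A x‖²`. -/

open scoped InnerProductSpace

/-- `descComp P k = P k ∘ P (k-1) ∘ ⋯ ∘ P 1`, empty composition is the identity. -/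
def descComp {H : Type*} [AddCommGroup H] [Module ℂ H]
    (P : ℕ → (H →ₗ[ℂ] H)) : ℕ → (H →ₗ[ℂ] H)
  | 0 => 1
  | k + 1 => P (k + 1) ∘ₗ descComp P k

/-- `ascComp P k = P 1 ∘ P 2 ∘ ⋯ ∘ P k`, empty composition is the identity. -/
def ascComp {H : Type*} [AddCommGroup H] [Module ℂ H]
    (P : ℕ → (H →ₗ[ℂ] H)) : ℕ → (H →ₗ[ℂ] H)
  | 0 => 1
  | k + 1 => ascComp P k ∘ₗ P (k + 1)

theorem Finset.sum_Icc_one_pred_sub {G : Type*} [AddCommGroup G] (f : ℕ → G) (n : ℕ) :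
    ∑ i ∈ Finset.Icc 1 n, (f (i - 1) - f i) = f 0 - f n := by
  induction n with
  | zero => simp
  | succ n ih =>
    rw [Finset.sum_Icc_succ_top (by omega), ih, Nat.add_sub_cancel]
    abel

namespace LinearMap.IsSymmetricProjection

variable {𝕜 E : Type*} [RCLike 𝕜] [NormedAddCommGroup E] [InnerProductSpace 𝕜 E]
  {T : E →ₗ[𝕜] E}

theorem one_sub (hT : T.IsSymmetricProjection) : (1 - T).IsSymmetricProjection :=
  ⟨hT.isIdempotentElem.one_sub, IsSymmetric.one.sub hT.isSymmetric⟩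

theorem inner_apply_right (hT : T.IsSymmetricProjection) (x y : E) :
    ⟪x, T y⟫_𝕜 = ⟪T x, T y⟫_𝕜 := by
  rw [hT.isSymmetric, ← Module.End.mul_apply, hT.isIdempotentElem.eq]

theorem re_inner_apply_right_le (hT : T.IsSymmetricProjection) (x y : E) :
    RCLike.re ⟪x, T y⟫_𝕜 ≤ ‖T x‖ * ‖T y‖ :=
  hT.inner_apply_right x y ▸ re_inner_le_norm _ _

theorem sqrt_re_inner_apply_self (hT : T.IsSymmetricProjection) (x : E) :
    √(RCLike.re ⟪x, T x⟫_𝕜) = ‖T x‖ := by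
  rw [hT.inner_apply_right, inner_self_eq_norm_sq, Real.sqrt_sq (norm_nonneg _)]

end LinearMap.IsSymmetricProjection

section ProjectionChains

open LinearMap

variable {H : Type*} [NormedAddCommGroup H] [InnerProductSpace ℂ H] (P : ℕ → (H →ₗ[ℂ] H))

theorem descComp_of_pos {i : ℕ} (hi : 0 < i) : descComp P i = P i ∘ₗ descComp P (i - 1) := by
  obtain ⟨k, rfl⟩ := Nat.exists_eq_add_of_lt hi
  rfl

variable {P}

theorem inner_ascComp_apply {k : ℕ} (hsym : ∀ i ∈ Finset.Icc 1 k, (P i).IsSymmetric)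
    (x y : H) : ⟪x, ascComp P k y⟫_ℂ = ⟪descComp P k x, y⟫_ℂ := by
  induction k generalizing x y with
  | zero => rfl
  | succ k ih =>
    have hsym' : ∀ i ∈ Finset.Icc 1 k, (P i).IsSymmetric := fun i hi =>
      hsym i (Finset.Icc_subset_Icc_right k.le_succ hi)
    change ⟪x, ascComp P k (P (k + 1) y)⟫_ℂ = ⟪P (k + 1) (descComp P k x), y⟫_ℂ
    rw [ih hsym', hsym (k + 1) (by simp)]

theorem sqrt_re_inner_ascComp_comp_descComp {k : ℕ}
    (hsym : ∀ i ∈ Finset.Icc 1 k, (P i).IsSymmetric) {A : H →ₗ[ℂ] H}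
    (hA : A.IsSymmetricProjection) (ψ : H) :
    √(RCLike.re ⟪ψ, (ascComp P k ∘ₗ A ∘ₗ descComp P k) ψ⟫_ℂ) = ‖A (descComp P k ψ)‖ := by
  simp only [comp_apply, inner_ascComp_apply hsym]
  exact hA.sqrt_re_inner_apply_self _

variable {i : ℕ} (hi : 0 < i) (hP : (P i).IsSymmetricProjection) (ψ : H)
include hi hP

theorem re_inner_descComp_le :
    RCLike.re ⟪ψ, descComp P i ψ⟫_ℂ ≤ ‖P i ψ‖ * ‖P i (descComp P (i - 1) ψ)‖ := by
  rw [descComp_of_pos P hi]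
  exact hP.re_inner_apply_right_le ψ _

theorem re_inner_descComp_pred_sub_le :
    RCLike.re ⟪ψ, descComp P (i - 1) ψ⟫_ℂ - RCLike.re ⟪ψ, descComp P i ψ⟫_ℂ
      ≤ ‖(1 - P i) ψ‖ * ‖(1 - P i) (descComp P (i - 1) ψ)‖ := by
  have h := hP.one_sub.re_inner_apply_right_le ψ (descComp P (i - 1) ψ)
  rw [descComp_of_pos P hi, comp_apply, ← map_sub, ← inner_sub_right]
  exact h

end ProjectionChains

theorem stmt2 {H : Type*} [NormedAddCommGroup H] [InnerProductSpace ℂ H]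
    (L : ℕ) (hL : 1 ≤ L) (P : ℕ → (H →ₗ[ℂ] H))
    (hsym : ∀ i ∈ Finset.Icc 1 L, (P i).IsSymmetric)
    (hidem : ∀ i ∈ Finset.Icc 1 L, P i ∘ₗ P i = P i)
    (ψ : H) (hψ : ‖ψ‖ = 1) :
    1 - Real.sqrt ((⟪ψ, P L ψ⟫_ℂ).re) *
          Real.sqrt ((⟪ψ, (ascComp P (L - 1) ∘ₗ P L ∘ₗ descComp P (L - 1)) ψ⟫_ℂ).re)
      ≤ ∑ i ∈ Finset.Icc 1 L,
          Real.sqrt ((⟪ψ, (1 - P i) ψ⟫_ℂ).re) *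
            Real.sqrt
              ((⟪ψ, (ascComp P (i - 1) ∘ₗ (1 - P i) ∘ₗ descComp P (i - 1)) ψ⟫_ℂ).re) := by
  have hP : ∀ i ∈ Finset.Icc 1 L, (P i).IsSymmetricProjection := fun i hi =>
    ⟨hidem i hi, hsym i hi⟩
  have hsym_pred : ∀ i ∈ Finset.Icc 1 L, ∀ j ∈ Finset.Icc 1 (i - 1), (P j).IsSymmetric :=
    fun i hi j hj => hsym j (Finset.Icc_subset_Icc_right (by simp at hi; omega) hj)
  have hLmem : L ∈ Finset.Icc 1 L := Finset.mem_Icc.2 ⟨hL, le_rfl⟩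
  set f : ℕ → ℝ := fun j => RCLike.re ⟪ψ, descComp P j ψ⟫_ℂ
  have hf0 : f 0 = 1 := by simp [f, descComp, inner_self_eq_norm_sq_to_K, hψ]
  simp only [← RCLike.re_to_complex]
  rw [(hP L hLmem).sqrt_re_inner_apply_self,
    sqrt_re_inner_ascComp_comp_descComp (hsym_pred L hLmem) (hP L hLmem)]
  calc 1 - ‖P L ψ‖ * ‖P L (descComp P (L - 1) ψ)‖
      ≤ f 0 - f L := by linarith [re_inner_descComp_le hL (hP L hLmem) ψ]
    _ = ∑ i ∈ Finset.Icc 1 L, (f (i - 1) - f i) := (Finset.sum_Icc_one_pred_sub f L).symm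
    _ ≤ _ := Finset.sum_le_sum fun i hi => by
      rw [(hP i hi).one_sub.sqrt_re_inner_apply_self,
        sqrt_re_inner_ascComp_comp_descComp (hsym_pred i hi) (hP i hi).one_sub]
      exact re_inner_descComp_pred_sub_le (Finset.mem_Icc.1 hi).1 (hP i hi) ψ
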